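/- Every shortened array code with modulus q, column-weight r ≥ 2 and girth at least ten has at most √(q − 3/4) + 1/2 retained block-columns in its parity-check matrix. -/

import Mathlib

/-- The Tanner graph of a (possibly shortened) array code with modulus `q`,
block-row labels `a 0, …, a (r-1)` (elements of `ZMod q`), and retained
block-column label set `S ⊆ ZMod q`.  Row vertices are pairs `(i, x)`
(block-row `i`, row `x` within the block); column vertices are pairs `(j, y)`
with `j ∈ S` (block-column labeled `j`, column `y` within the block).
A row `(i, x)` is adjacent to a column `(j, y)` iff the corresponding entry of
the parity-check matrix, i.e. entry `(x, y)` of `P ^ (a i * j)`, equals `1`,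
which happens iff `y = x + a i * j`. -/
def tannerGraph (q r : ℕ) (a : Fin r → ZMod q) (S : Finset (ZMod q)) :
    SimpleGraph ((Fin r × ZMod q) ⊕ ({j // j ∈ S} × ZMod q)) where
  Adj u v :=
    match u, v with
    | Sum.inl (i, x), Sum.inr (j, y) => y = x + a i * (j : ZMod q)
    | Sum.inr (j, y), Sum.inl (i, x) => y = x + a i * (j : ZMod q)
    | _, _ => False
  symm := by
    constructor
    rintro (⟨i, x⟩ | ⟨j, y⟩) (⟨i', x'⟩ | ⟨j', y'⟩) h <;> simp_all
  loopless := by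
    constructor
    rintro (⟨i, x⟩ | ⟨j, y⟩) h <;> simp_all


/-!
Two block-rows with labels `α ≠ β` and a coincidence `j₁ - j₂ = j₃ - j₄` of differences of
retained labels give a closed walk of length 8 in the Tanner graph, alternating between the
block-rows `α` and `β` and visiting the block-columns `j₁, j₃, j₄, j₂`: the row coordinate
returns to its start because it moves by `(α - β)(j₁ - j₃ + j₄ - j₂) = 0`, and the vertices are
distinct because `α - β` is invertible modulo `q`. Hence girth at least ten forces the nonzero
differences of `S` to be distinct, so `|S|(|S| - 1) ≤ q - 1`, i.e. `(|S| - 1/2)² ≤ q - 3/4`.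
-/

open Finset Function

theorem SimpleGraph.egirth_le_of_injective_of_adj {V : Type*} {G : SimpleGraph V} {n : ℕ}
    (f : Fin (n + 3) → V) (hf : Injective f) (hadj : ∀ k, G.Adj (f k) (f (k + 1))) :
    G.egirth ≤ n + 3 := by
  have hcopy : (cycleGraph (n + 3)).IsContained G := by
    refine ⟨⟨⟨f, fun {u v} huv => ?_⟩, hf⟩⟩
    rcases cycleGraph_adj.mp huv with h | h
    · rw [sub_eq_iff_eq_add'.mp h]
      exact (hadj v).symm
    · rw [sub_eq_iff_eq_add'.mp h]
      exact hadj u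
  obtain ⟨_, c, hc, hlen⟩ := (cycleGraph_isContained_iff (by omega)).mp hcopy
  exact_mod_cast hlen ▸ egirth_le_length hc

theorem Finset.card_mul_pred_lt_of_injOn_sub {G : Type*} [AddGroup G] [Fintype G] [DecidableEq G]
    {S : Finset G} (hS : Set.InjOn (fun p : G × G => p.1 - p.2) S.offDiag) :
    #S * (#S - 1) < Fintype.card G := by
  have hmaps : Set.MapsTo (fun p : G × G => p.1 - p.2) S.offDiag (univ.erase 0 : Finset G) := by
    intro p hp
    simpa [sub_eq_zero] using (mem_offDiag.mp hp).2.2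
  calc #S * (#S - 1) = #S.offDiag := by rw [offDiag_card, Nat.mul_sub_one]
    _ ≤ #(univ.erase (0 : G)) := card_le_card_of_injOn _ hmaps hS
    _ < Fintype.card G := card_erase_lt_of_mem (mem_univ _)

theorem natCast_le_sqrt_sub_add_half_of_mul_pred_lt {k q : ℕ} (h : k * (k - 1) < q) :
    (k : ℝ) ≤ √((q : ℝ) - 3 / 4) + 1 / 2 := by
  obtain _ | m := k
  · simp only [CharP.cast_eq_zero]; positivity
  have hq : ((m : ℝ) + 1) * m + 1 ≤ q := by exact_mod_cast h
  have := Real.le_sqrt_of_sq_le (x := (m : ℝ) + 1 / 2) (y := q - 3 / 4) (by nlinarith)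
  push_cast
  linarith

section TannerGraph

variable {q r : ℕ} {a : Fin r → ZMod q} {S : Finset (ZMod q)}

@[simp]
theorem tannerGraph_adj_inl_inr {i : Fin r} {x : ZMod q} {j : {j // j ∈ S}} {y : ZMod q} :
    (tannerGraph q r a S).Adj (.inl (i, x)) (.inr (j, y)) ↔ y = x + a i * j :=
  Iff.rfl

@[simp]
theorem tannerGraph_adj_inr_inl {i : Fin r} {x : ZMod q} {j : {j // j ∈ S}} {y : ZMod q} :
    (tannerGraph q r a S).Adj (.inr (j, y)) (.inl (i, x)) ↔ y = x + a i * j :=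
  Iff.rfl

theorem tannerGraph_egirth_le_eight [Fact q.Prime] {i i' : Fin r} (hi : a i ≠ a i')
    {j₁ j₂ j₃ j₄ : ZMod q} (h₁ : j₁ ∈ S) (h₂ : j₂ ∈ S) (h₃ : j₃ ∈ S) (h₄ : j₄ ∈ S)
    (h₁₂ : j₁ ≠ j₂) (h₁₃ : j₁ ≠ j₃) (hsub : j₁ - j₂ = j₃ - j₄) :
    (tannerGraph q r a S).egirth ≤ 8 := by
  obtain ⟨d, hd⟩ : ∃ d, a i - a i' = d := ⟨_, rfl⟩
  have hd0 : d ≠ 0 := hd ▸ sub_ne_zero.mpr hi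
  have hii' : i ≠ i' := fun h => hi (congrArg a h)
  have h₃₄ : j₃ ≠ j₄ := fun h => h₁₂ (by linear_combination hsub + h)
  have h₂₄ : j₂ ≠ j₄ := fun h => h₁₃ (by linear_combination hsub + h)
  let f : Fin 8 → (Fin r × ZMod q) ⊕ ({j // j ∈ S} × ZMod q) :=
    ![.inl (i, 0), .inr (⟨j₁, h₁⟩, a i * j₁),
      .inl (i', d * j₁), .inr (⟨j₃, h₃⟩, d * j₁ + a i' * j₃),
      .inl (i, d * (j₁ - j₃)), .inr (⟨j₄, h₄⟩, d * (j₁ - j₃) + a i * j₄),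
      .inl (i', d * (j₁ - j₃ + j₄)), .inr (⟨j₂, h₂⟩, d * (j₁ - j₃ + j₄) + a i' * j₂)]
  have hrow₀ : 0 ≠ d * (j₁ - j₃) := (mul_ne_zero hd0 (sub_ne_zero.mpr h₁₃)).symm
  have hrow₁ : d * j₁ ≠ d * (j₁ - j₃ + j₄) := fun e =>
    h₃₄ (by linear_combination mul_left_cancel₀ hd0 e)
  have hcol₀ : j₁ = j₄ → a i * j₁ ≠ d * (j₁ - j₃) + a i * j₄ := fun h₁₄ e =>
    hrow₀ (by linear_combination e - a i * h₁₄)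
  have hcol₁ : j₃ = j₂ → d * j₁ + a i' * j₃ ≠ d * (j₁ - j₃ + j₄) + a i' * j₂ := fun h₃₂ e =>
    mul_ne_zero hd0 (sub_ne_zero.mpr h₃₄) (by linear_combination e - a i' * h₃₂)
  have hf : Injective f := by
    rw [← List.nodup_ofFn]
    simpa [f, List.ofFn_succ, hii', hii'.symm, h₁₂, h₁₃, h₃₄, h₂₄.symm, hrow₀, hrow₁]
      using And.intro hcol₀ hcol₁
  refine SimpleGraph.egirth_le_of_injective_of_adj (n := 5) f hf fun k => ?_
  fin_cases k <;>
    simp only [f, Matrix.cons_val, Fin.reduceAdd, Fin.reduceFinMk, zero_add, tannerGraph_adj_inl_inr,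
      tannerGraph_adj_inr_inl]
  · linear_combination j₁ * hd
  · linear_combination -j₃ * hd
  · linear_combination j₄ * hd
  · linear_combination d * hsub - j₂ * hd

theorem tannerGraph_injOn_sub_offDiag [Fact q.Prime] {i i' : Fin r} (hi : a i ≠ a i')
    (hgirth : 10 ≤ (tannerGraph q r a S).egirth) :
    Set.InjOn (fun p : ZMod q × ZMod q => p.1 - p.2) S.offDiag := by
  rintro ⟨j₁, j₂⟩ hp ⟨j₃, j₄⟩ hp' hsub
  obtain ⟨h₁, h₂, h₁₂⟩ := mem_offDiag.mp hp
  obtain ⟨h₃, h₄, -⟩ := mem_offDiag.mp hp'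
  by_contra hne
  have h₁₃ : j₁ ≠ j₃ := by
    rintro rfl
    exact hne (by simpa using hsub)
  have := hgirth.trans (tannerGraph_egirth_le_eight hi h₁ h₂ h₃ h₄ h₁₂ h₁₃ hsub)
  norm_num at this

end TannerGraph

theorem arrayCode_girth_ten_card_le_general (q r : ℕ) (hq : q.Prime)
    (hr : 2 ≤ r) (a : Fin r → ZMod q) (ha : Function.Injective a)
    (S : Finset (ZMod q)) (hgirth : 10 ≤ (tannerGraph q r a S).egirth) :
    (S.card : ℝ) ≤ Real.sqrt ((q : ℝ) - 3 / 4) + 1 / 2 := by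
  have := Fact.mk hq
  have h01 : (⟨0, by omega⟩ : Fin r) ≠ ⟨1, by omega⟩ := by simp
  have hcard := card_mul_pred_lt_of_injOn_sub (tannerGraph_injOn_sub_offDiag (ha.ne h01) hgirth)
  rw [ZMod.card] at hcard
  exact natCast_le_sqrt_sub_add_half_of_mul_pred_lt hcard

/-- Every shortened array code with modulus `q` (an odd prime),
column-weight `r ≥ 2` (distinct block-row labels) and girth at least ten has at
most `√(q - 3/4) + 1/2` retained block-columns in its parity-check matrix. -/
theorem arrayCode_girth_ten_card_le (q r : ℕ) (hq : q.Prime) (hqodd : Odd q)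
    (hr : 2 ≤ r) (a : Fin r → ZMod q) (ha : Function.Injective a)
    (S : Finset (ZMod q)) (hgirth : 10 ≤ (tannerGraph q r a S).egirth) :
    (S.card : ℝ) ≤ Real.sqrt ((q : ℝ) - 3 / 4) + 1 / 2 :=
  arrayCode_girth_ten_card_le_general q r hq hr a ha S hgirth
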